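/- (One-step descent bound for AltGDmin, noise-free case.) Let U* and U be real n×r matrices with orthonormal columns, let P := I − U*(U*)ᵀ and δ := ‖P U‖. Let B and B* be real r×q matrices, let grad be a real n×r matrix, set X* := U* B* and E := (U B − X*) Bᵀ. Assume: η ≥ 0, η‖B‖² ≤ 0.9, 0 < δ < 1/2, η(‖E‖ + ‖grad − E‖) < 1/2, and ‖grad − E‖ ≤ δ·λ_min(B Bᵀ). Then 1 − η‖grad‖ > 0 and ‖P(U − η·grad)‖ / (1 − η‖grad‖) ≤ δ·(1 − η·(λ_min(B Bᵀ) − 3‖grad − E‖/δ − 2‖E‖)). Consequently, if U − η·grad = U⁺ R⁺ is a QR decomposition with U⁺ having orthonormal columns and R⁺ invertible, then ‖(I − U*(U*)ᵀ) U⁺‖ ≤ δ·(1 − η·(λ_min(B Bᵀ) − 3‖grad − E‖/δ − 2‖E‖)). -/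
import Mathlib

open Matrix
open scoped RealInnerProductSpace

/-- Spectral norm (operator norm induced by the Euclidean norm) of a real matrix. -/
noncomputable def specNorm {m n : ℕ} (M : Matrix (Fin m) (Fin n) ℝ) : ℝ :=
  ‖LinearMap.toContinuousLinearMap (Matrix.toEuclideanLin M)‖

/-- Smallest eigenvalue of a (symmetric) square matrix, via the Rayleigh quotient:
minimum of `⟪x, M x⟫` over unit vectors `x`. -/
noncomputable def lambdaMin {n : ℕ} (M : Matrix (Fin n) (Fin n) ℝ) : ℝ :=
  ⨅ x : Metric.sphere (0 : EuclideanSpace ℝ (Fin n)) 1,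
    ⟪(x : EuclideanSpace ℝ (Fin n)),
      Matrix.toEuclideanLin M (x : EuclideanSpace ℝ (Fin n))⟫

section Helpers

open scoped Matrix.Norms.L2Operator

lemma specNorm_eq_norm {m n : ℕ} (M : Matrix (Fin m) (Fin n) ℝ) : specNorm M = ‖M‖ := rfl

lemma TL_mul {m n p : ℕ} (A : Matrix (Fin m) (Fin n) ℝ) (C : Matrix (Fin n) (Fin p) ℝ)
    (x : EuclideanSpace ℝ (Fin p)) :
    Matrix.toEuclideanLin (A * C) x = Matrix.toEuclideanLin A (Matrix.toEuclideanLin C x) := by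
  simp [Matrix.toEuclideanLin_apply, Matrix.mulVec_mulVec]

lemma TL_one {n : ℕ} (x : EuclideanSpace ℝ (Fin n)) :
    Matrix.toEuclideanLin (1 : Matrix (Fin n) (Fin n) ℝ) x = x := by
  simp [Matrix.toEuclideanLin_apply]

lemma TL_le {m n : ℕ} (A : Matrix (Fin m) (Fin n) ℝ) (x : EuclideanSpace ℝ (Fin n)) :
    ‖Matrix.toEuclideanLin A x‖ ≤ ‖A‖ * ‖x‖ :=
  (LinearMap.toContinuousLinearMap (Matrix.toEuclideanLin A)).le_opNorm x

lemma norm_le_of_bound {m n : ℕ} (A : Matrix (Fin m) (Fin n) ℝ) (c : ℝ) (hc : 0 ≤ c)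
    (h : ∀ x : EuclideanSpace ℝ (Fin n), ‖Matrix.toEuclideanLin A x‖ ≤ c * ‖x‖) : ‖A‖ ≤ c :=
  ContinuousLinearMap.opNorm_le_bound _ hc h

lemma inner_TL_transpose {m n : ℕ} (A : Matrix (Fin m) (Fin n) ℝ) (y : EuclideanSpace ℝ (Fin m))
    (x : EuclideanSpace ℝ (Fin n)) :
    ⟪Matrix.toEuclideanLin Aᵀ y, x⟫ = ⟪y, Matrix.toEuclideanLin A x⟫ := by
  rw [← Matrix.conjTranspose_eq_transpose_of_trivial,
    Matrix.toEuclideanLin_conjTranspose_eq_adjoint, LinearMap.adjoint_inner_left]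

lemma normsq_TL {m n : ℕ} (A : Matrix (Fin m) (Fin n) ℝ) (x : EuclideanSpace ℝ (Fin n)) :
    ‖Matrix.toEuclideanLin A x‖ ^ 2 = ⟪x, Matrix.toEuclideanLin (Aᵀ * A) x⟫ := by
  rw [TL_mul, real_inner_comm, inner_TL_transpose]
  exact (real_inner_self_eq_norm_sq _).symm

lemma quad_BBt {m n : ℕ} (B : Matrix (Fin m) (Fin n) ℝ) (x : EuclideanSpace ℝ (Fin m)) :
    ⟪x, Matrix.toEuclideanLin (B * Bᵀ) x⟫ = ‖Matrix.toEuclideanLin Bᵀ x‖ ^ 2 := by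
  rw [normsq_TL, Matrix.transpose_transpose]

lemma TL_isometry {m n : ℕ} (U : Matrix (Fin m) (Fin n) ℝ) (hU : Uᵀ * U = 1)
    (x : EuclideanSpace ℝ (Fin n)) : ‖Matrix.toEuclideanLin U x‖ = ‖x‖ := by
  have h := normsq_TL U x
  rw [hU, TL_one, real_inner_self_eq_norm_sq] at h
  have h0 := norm_nonneg (Matrix.toEuclideanLin U x)
  nlinarith [norm_nonneg x]

lemma norm_transpose {m n : ℕ} (A : Matrix (Fin m) (Fin n) ℝ) : ‖Aᵀ‖ = ‖A‖ := by
  rw [← Matrix.conjTranspose_eq_transpose_of_trivial]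
  exact Matrix.l2_opNorm_conjTranspose A

lemma proj_norm_le_one {m r : ℕ} (Us : Matrix (Fin m) (Fin r) ℝ) (hUs : Usᵀ * Us = 1) :
    ‖(1 : Matrix (Fin m) (Fin m) ℝ) - Us * Usᵀ‖ ≤ 1 := by
  set P : Matrix (Fin m) (Fin m) ℝ := 1 - Us * Usᵀ with hPdef
  have hPP : Pᵀ * P = P := by
    have : Pᵀ = P := by
      simp [hPdef, Matrix.transpose_sub, Matrix.transpose_mul, Matrix.transpose_one]
    rw [this, hPdef]
    rw [Matrix.sub_mul, Matrix.mul_sub, Matrix.mul_sub, Matrix.one_mul, Matrix.mul_one]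
    rw [show Us * Usᵀ * (Us * Usᵀ) = Us * (Usᵀ * Us) * Usᵀ by
      rw [Matrix.mul_assoc, Matrix.mul_assoc, Matrix.mul_assoc], hUs, Matrix.mul_one,
      Matrix.one_mul]
    abel
  refine norm_le_of_bound _ 1 zero_le_one fun x => ?_
  have h1 : ‖Matrix.toEuclideanLin P x‖ ^ 2 = ⟪x, Matrix.toEuclideanLin P x⟫ := by
    rw [normsq_TL, hPP]
  have h2 : ⟪x, Matrix.toEuclideanLin P x⟫ ≤ ‖x‖ ^ 2 := by
    have : Matrix.toEuclideanLin P x = x - Matrix.toEuclideanLin (Us * Usᵀ) x := by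
      simp [hPdef, map_sub, TL_one]
    rw [this, inner_sub_right, real_inner_self_eq_norm_sq, quad_BBt]
    nlinarith [norm_nonneg (Matrix.toEuclideanLin Usᵀ x)]
  have h0 := norm_nonneg (Matrix.toEuclideanLin P x)
  nlinarith [norm_nonneg x]

lemma lambdaMin_nonneg {m n : ℕ} (B : Matrix (Fin m) (Fin n) ℝ) : 0 ≤ lambdaMin (B * Bᵀ) := by
  refine Real.iInf_nonneg fun x => ?_
  rw [quad_BBt]; positivity

lemma lambdaMin_le_inner {m n : ℕ} (B : Matrix (Fin m) (Fin n) ℝ)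
    (x : EuclideanSpace ℝ (Fin m)) (hx : ‖x‖ = 1) :
    lambdaMin (B * Bᵀ) ≤ ‖Matrix.toEuclideanLin Bᵀ x‖ ^ 2 := by
  have hmem : x ∈ Metric.sphere (0 : EuclideanSpace ℝ (Fin m)) 1 := by
    simp [mem_sphere_iff_norm, hx]
  have hbdd : BddBelow (Set.range fun y : Metric.sphere (0 : EuclideanSpace ℝ (Fin m)) 1 =>
      ⟪(y : EuclideanSpace ℝ (Fin m)), Matrix.toEuclideanLin (B * Bᵀ) y⟫) := by
    refine ⟨0, fun v hv => ?_⟩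
    obtain ⟨y, rfl⟩ := hv
    dsimp only
    rw [quad_BBt]; positivity
  have := ciInf_le hbdd (⟨x, hmem⟩ : Metric.sphere (0 : EuclideanSpace ℝ (Fin m)) 1)
  rwa [quad_BBt] at this

lemma lambdaMin_quad {m n : ℕ} (B : Matrix (Fin m) (Fin n) ℝ) (x : EuclideanSpace ℝ (Fin m)) :
    lambdaMin (B * Bᵀ) * ‖x‖ ^ 2 ≤ ‖Matrix.toEuclideanLin Bᵀ x‖ ^ 2 := by
  rcases eq_or_ne x 0 with rfl | hx
  · simp
  · have hxn : ‖x‖ ≠ 0 := norm_ne_zero_iff.mpr hx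
    have hu : ‖(‖x‖⁻¹ • x : EuclideanSpace ℝ (Fin m))‖ = 1 := norm_smul_inv_norm hx
    have h := lambdaMin_le_inner B (‖x‖⁻¹ • x) hu
    rw [_root_.map_smul, norm_smul] at h
    have h2 : lambdaMin (B * Bᵀ) ≤ (‖x‖⁻¹) ^ 2 * ‖Matrix.toEuclideanLin Bᵀ x‖ ^ 2 := by
      simpa [mul_pow, abs_of_nonneg (inv_nonneg.mpr (norm_nonneg x))] using h
    have hx2 : (0:ℝ) < ‖x‖ ^ 2 := by positivity
    calc lambdaMin (B * Bᵀ) * ‖x‖ ^ 2 ≤ (‖x‖⁻¹) ^ 2 * ‖Matrix.toEuclideanLin Bᵀ x‖ ^ 2 * ‖x‖ ^ 2 :=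
          mul_le_mul_of_nonneg_right h2 hx2.le
      _ = ‖Matrix.toEuclideanLin Bᵀ x‖ ^ 2 := by field_simp

lemma sym_norm_le {n : ℕ} (S : Matrix (Fin n) (Fin n) ℝ) (hS : Sᵀ = S) (c : ℝ) (hc : 0 ≤ c)
    (h : ∀ z : EuclideanSpace ℝ (Fin n), |⟪z, Matrix.toEuclideanLin S z⟫| ≤ c * ‖z‖ ^ 2) :
    ‖S‖ ≤ c := by
  set T := Matrix.toEuclideanLin S with hT
  have hsym : ∀ a b : EuclideanSpace ℝ (Fin n), ⟪T a, b⟫ = ⟪a, T b⟫ := by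
    intro a b
    rw [hT, ← hS, inner_TL_transpose, hS]
  have key : ∀ x : EuclideanSpace ℝ (Fin n), ‖x‖ = 1 → ‖T x‖ ≤ c := by
    intro x hx
    rcases eq_or_ne (T x) 0 with h0 | h0
    · rw [h0]; simpa using hc
    · set y : EuclideanSpace ℝ (Fin n) := ‖T x‖⁻¹ • T x with hy
      have hyn : ‖y‖ = 1 := norm_smul_inv_norm h0
      have hip : ⟪y, T x⟫ = ‖T x‖ := by
        rw [hy, real_inner_smul_left, real_inner_self_eq_norm_sq, sq]
        field_simp
      have h1 : ⟪x, T y⟫ = ⟪y, T x⟫ := by rw [← hsym, real_inner_comm]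
      have hpol : ⟪x + y, T (x + y)⟫ - ⟪x - y, T (x - y)⟫ = 4 * ‖T x‖ := by
        rw [map_add, map_sub, inner_add_left, inner_add_right, inner_add_right,
          inner_sub_left, inner_sub_right, inner_sub_right]
        rw [show (⟪x, T x⟫ + ⟪x, T y⟫ + (⟪y, T x⟫ + ⟪y, T y⟫) -
            (⟪x, T x⟫ - ⟪x, T y⟫ - (⟪y, T x⟫ - ⟪y, T y⟫)) : ℝ)
            = 2 * ⟪x, T y⟫ + 2 * ⟪y, T x⟫ by ring, h1, hip]
        ring
      have hb1 := h (x + y)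
      have hb2 := h (x - y)
      have hpar : ‖x + y‖ ^ 2 + ‖x - y‖ ^ 2 = 2 * ‖x‖ ^ 2 + 2 * ‖y‖ ^ 2 := by
        rw [norm_add_sq_real, norm_sub_sq_real]; ring
      have hc4 : c * (‖x + y‖ ^ 2 + ‖x - y‖ ^ 2) = 4 * c := by
        rw [hpar, hx, hyn]; ring
      have e1 := abs_le.mp hb1
      have e2 := abs_le.mp hb2
      nlinarith [e1.2, e2.1]
  refine norm_le_of_bound _ c hc fun x => ?_
  rcases eq_or_ne x 0 with rfl | hx
  · simp
  · have hxn : ‖x‖ ≠ 0 := norm_ne_zero_iff.mpr hx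
    have hu := key (‖x‖⁻¹ • x) (norm_smul_inv_norm hx)
    rw [_root_.map_smul, norm_smul, norm_inv, norm_norm] at hu
    have hxpos : (0:ℝ) < ‖x‖ := (norm_nonneg x).lt_of_ne' hxn
    calc ‖T x‖ = ‖x‖ * (‖x‖⁻¹ * ‖T x‖) := by field_simp
      _ ≤ ‖x‖ * c := mul_le_mul_of_nonneg_left hu hxpos.le
      _ = c * ‖x‖ := mul_comm _ _

end Helpers

set_option maxHeartbeats 2000000 in
open scoped Matrix.Norms.L2Operator in
/-- one-step descent bound for AltGDmin, noise-free case. -/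
theorem altGDmin_one_step_descent (n r q : ℕ)
    (Ustar U : Matrix (Fin n) (Fin r) ℝ)
    (hU : Uᵀ * U = 1) (hUs : Ustarᵀ * Ustar = 1)
    (B Bstar : Matrix (Fin r) (Fin q) ℝ)
    (grad : Matrix (Fin n) (Fin r) ℝ) (η : ℝ)
    (P : Matrix (Fin n) (Fin n) ℝ)
    (hP : P = (1 : Matrix (Fin n) (Fin n) ℝ) - Ustar * Ustarᵀ)
    (δ : ℝ) (hδdef : δ = specNorm (P * U))
    (Xstar : Matrix (Fin n) (Fin q) ℝ) (hX : Xstar = Ustar * Bstar)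
    (E : Matrix (Fin n) (Fin r) ℝ) (hE : E = (U * B - Xstar) * Bᵀ)
    (hη0 : 0 ≤ η) (hηB : η * specNorm B ^ 2 ≤ 0.9)
    (hδpos : 0 < δ) (hδhalf : δ < 1 / 2)
    (hsmall : η * (specNorm E + specNorm (grad - E)) < 1 / 2)
    (hdev : specNorm (grad - E) ≤ δ * lambdaMin (B * Bᵀ)) :
    0 < 1 - η * specNorm grad ∧
    specNorm (P * (U - η • grad)) / (1 - η * specNorm grad) ≤
      δ * (1 - η * (lambdaMin (B * Bᵀ) - 3 * specNorm (grad - E) / δ - 2 * specNorm E)) ∧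
    ∀ (Uplus : Matrix (Fin n) (Fin r) ℝ) (Rplus : Matrix (Fin r) (Fin r) ℝ),
      U - η • grad = Uplus * Rplus → Uplusᵀ * Uplus = 1 → IsUnit Rplus →
      specNorm (((1 : Matrix (Fin n) (Fin n) ℝ) - Ustar * Ustarᵀ) * Uplus) ≤
        δ * (1 - η * (lambdaMin (B * Bᵀ) - 3 * specNorm (grad - E) / δ - 2 * specNorm E)) := by
  simp only [specNorm_eq_norm] at hδdef hηB hsmall hdev ⊢
  -- dispose of the degenerate case r = 0
  rcases Nat.eq_zero_or_pos r with hr | hr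
  · exfalso
    have hPU : P * U = 0 := by
      ext i j
      exact absurd j.isLt (by omega)
    rw [hPU, norm_zero] at hδdef
    linarith
  -- notation
  set lam : ℝ := lambdaMin (B * Bᵀ) with hlam
  set ε : ℝ := ‖grad - E‖ with hε
  set e : ℝ := ‖E‖ with he
  have hlam0 : 0 ≤ lam := lambdaMin_nonneg B
  have hεnn : 0 ≤ ε := norm_nonneg _
  have henn : 0 ≤ e := norm_nonneg _
  -- lam ≤ ‖B‖ ^ 2
  have hlamB : lam ≤ ‖B‖ ^ 2 := by
    set x0 : EuclideanSpace ℝ (Fin r) := EuclideanSpace.single ⟨0, hr⟩ (1 : ℝ) with hx0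
    have hx0n : ‖x0‖ = 1 := by simp [hx0, EuclideanSpace.norm_single]
    have h1 := lambdaMin_le_inner B x0 hx0n
    have h2 : ‖Matrix.toEuclideanLin Bᵀ x0‖ ≤ ‖B‖ := by
      calc ‖Matrix.toEuclideanLin Bᵀ x0‖ ≤ ‖Bᵀ‖ * ‖x0‖ := TL_le _ _
        _ = ‖B‖ := by rw [norm_transpose, hx0n, mul_one]
    calc lam ≤ ‖Matrix.toEuclideanLin Bᵀ x0‖ ^ 2 := h1
      _ ≤ ‖B‖ ^ 2 := by nlinarith [norm_nonneg (Matrix.toEuclideanLin Bᵀ x0)]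
  have ha9 : η * lam ≤ 0.9 := by nlinarith
  -- norm of grad
  have hg : ‖grad‖ ≤ e + ε := by
    calc ‖grad‖ = ‖E + (grad - E)‖ := by rw [show E + (grad - E) = grad by abel]
      _ ≤ e + ε := norm_add_le _ _
  have hηg : η * ‖grad‖ ≤ η * (e + ε) := mul_le_mul_of_nonneg_left hg hη0
  have part1 : 0 < 1 - η * ‖grad‖ := by linarith
  -- norm bound on 1 - η • (B * Bᵀ)
  have hSbound : ‖(1 : Matrix (Fin r) (Fin r) ℝ) - η • (B * Bᵀ)‖ ≤ 1 - η * lam := by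
    refine sym_norm_le _ ?_ _ (by linarith) ?_
    · simp [Matrix.transpose_sub, Matrix.transpose_smul, Matrix.transpose_mul,
        Matrix.transpose_one, Matrix.transpose_transpose]
    · intro z
      have hz : Matrix.toEuclideanLin ((1 : Matrix (Fin r) (Fin r) ℝ) - η • (B * Bᵀ)) z
          = z - η • Matrix.toEuclideanLin (B * Bᵀ) z := by
        rw [map_sub, _root_.map_smul, LinearMap.sub_apply, LinearMap.smul_apply]
        rw [TL_one]
      rw [hz, inner_sub_right, real_inner_smul_right, real_inner_self_eq_norm_sq, quad_BBt]
      set t : ℝ := ‖Matrix.toEuclideanLin Bᵀ z‖ with ht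
      have hq : lam * ‖z‖ ^ 2 ≤ t ^ 2 := lambdaMin_quad B z
      have htB : t ≤ ‖B‖ * ‖z‖ := by
        calc t ≤ ‖Bᵀ‖ * ‖z‖ := TL_le _ _
          _ = ‖B‖ * ‖z‖ := by rw [norm_transpose]
      have ht0 : 0 ≤ t := norm_nonneg _
      have ht2 : t ^ 2 ≤ ‖B‖ ^ 2 * ‖z‖ ^ 2 := by nlinarith [norm_nonneg z, norm_nonneg B]
      rw [abs_le]
      constructor
      · nlinarith [sq_nonneg ‖z‖, mul_le_mul_of_nonneg_right hηB (sq_nonneg ‖z‖),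
          mul_le_mul_of_nonneg_left ht2 hη0]
      · nlinarith [mul_le_mul_of_nonneg_left hq hη0]
  -- key identity
  have hPUs : P * Ustar = 0 := by
    rw [hP, Matrix.sub_mul, Matrix.one_mul, Matrix.mul_assoc, hUs, Matrix.mul_one, sub_self]
  have hPE : P * E = P * U * (B * Bᵀ) := by
    have h0 : P * (Ustar * Bstar * Bᵀ) = 0 := by
      rw [show Ustar * Bstar * Bᵀ = Ustar * (Bstar * Bᵀ) from Matrix.mul_assoc _ _ _,
        ← Matrix.mul_assoc, hPUs, Matrix.zero_mul]
    calc P * E = P * (U * B * Bᵀ) - P * (Ustar * Bstar * Bᵀ) := by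
          rw [hE, hX, Matrix.sub_mul, Matrix.mul_sub]
      _ = P * (U * B * Bᵀ) := by rw [h0, sub_zero]
      _ = P * U * (B * Bᵀ) := by simp only [Matrix.mul_assoc]
  have hkey : P * (U - η • grad)
      = P * U * ((1 : Matrix (Fin r) (Fin r) ℝ) - η • (B * Bᵀ)) - η • (P * (grad - E)) := by
    rw [Matrix.mul_sub P U (η • grad), Matrix.mul_smul,
      Matrix.mul_sub (P * U), Matrix.mul_one, Matrix.mul_smul,
      Matrix.mul_sub P grad E, smul_sub, hPE]
    abel
  -- bound on numerator
  have hN : ‖P * (U - η • grad)‖ ≤ δ * (1 - η * lam) + η * ε := by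
    rw [hkey]
    have hterm1 : ‖P * U * ((1 : Matrix (Fin r) (Fin r) ℝ) - η • (B * Bᵀ))‖
        ≤ δ * (1 - η * lam) := by
      calc ‖P * U * ((1 : Matrix (Fin r) (Fin r) ℝ) - η • (B * Bᵀ))‖
          ≤ ‖P * U‖ * ‖(1 : Matrix (Fin r) (Fin r) ℝ) - η • (B * Bᵀ)‖ :=
            Matrix.l2_opNorm_mul _ _
        _ ≤ δ * (1 - η * lam) := by
            rw [← hδdef]
            exact mul_le_mul_of_nonneg_left hSbound hδpos.le
    have hterm2 : ‖η • (P * (grad - E))‖ ≤ η * ε := by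
      rw [norm_smul, Real.norm_of_nonneg hη0]
      have : ‖P * (grad - E)‖ ≤ ε := by
        calc ‖P * (grad - E)‖ ≤ ‖P‖ * ‖grad - E‖ := Matrix.l2_opNorm_mul _ _
          _ ≤ 1 * ε := by
              refine mul_le_mul_of_nonneg_right ?_ hεnn
              rw [hP]; exact proj_norm_le_one Ustar hUs
          _ = ε := one_mul ε
      exact mul_le_mul_of_nonneg_left this hη0
    calc ‖P * U * ((1 : Matrix (Fin r) (Fin r) ℝ) - η • (B * Bᵀ)) - η • (P * (grad - E))‖
        ≤ ‖P * U * ((1 : Matrix (Fin r) (Fin r) ℝ) - η • (B * Bᵀ))‖ + ‖η • (P * (grad - E))‖ :=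
          norm_sub_le _ _
      _ ≤ δ * (1 - η * lam) + η * ε := add_le_add hterm1 hterm2
  -- target rewrite
  have hT : δ * (1 - η * (lam - 3 * ε / δ - 2 * e))
      = δ * (1 - η * lam) + 3 * (η * ε) + 2 * (η * δ * e) := by
    field_simp
    ring
  have hT0 : 0 ≤ δ * (1 - η * (lam - 3 * ε / δ - 2 * e)) := by
    rw [hT]
    have h1 : 0 ≤ δ * (1 - η * lam) := by nlinarith
    have h2 : 0 ≤ η * ε := mul_nonneg hη0 hεnn
    have h3 : 0 ≤ η * δ * e := mul_nonneg (mul_nonneg hη0 hδpos.le) henn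
    linarith
  -- core scalar inequality
  have hcore : δ * (1 - η * lam) + η * ε
      ≤ (δ * (1 - η * (lam - 3 * ε / δ - 2 * e))) * (1 - η * (e + ε)) := by
    rw [hT]
    have hX2 : η * (e + ε) ≤ 1 / 2 := hsmall.le
    have hXnn : 0 ≤ η * (e + ε) := by positivity
    nlinarith [mul_nonneg (mul_nonneg hη0 hεnn) (by linarith : (0:ℝ) ≤ 1/2 - η * (e + ε)),
      mul_nonneg (mul_nonneg (mul_nonneg hη0 hδpos.le) henn)
        (by linarith : (0:ℝ) ≤ 1/2 - η * (e + ε)),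
      mul_nonneg (mul_nonneg hδpos.le (mul_nonneg hη0 hlam0)) hXnn,
      mul_nonneg (by linarith : (0:ℝ) ≤ 1/2 - δ) (mul_nonneg hη0 hεnn),
      mul_nonneg (mul_nonneg hη0 henn) (by linarith : (0:ℝ) ≤ 1/2 - δ),
      mul_nonneg (mul_nonneg hη0 hεnn) hXnn, mul_nonneg (mul_nonneg hη0 henn) hXnn]
  have part2 : ‖P * (U - η • grad)‖ / (1 - η * ‖grad‖) ≤
      δ * (1 - η * (lam - 3 * ε / δ - 2 * e)) := by
    rw [div_le_iff₀ part1]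
    calc ‖P * (U - η • grad)‖ ≤ δ * (1 - η * lam) + η * ε := hN
      _ ≤ (δ * (1 - η * (lam - 3 * ε / δ - 2 * e))) * (1 - η * (e + ε)) := hcore
      _ ≤ (δ * (1 - η * (lam - 3 * ε / δ - 2 * e))) * (1 - η * ‖grad‖) :=
          mul_le_mul_of_nonneg_left (by linarith) hT0
  refine ⟨part1, part2, ?_⟩
  -- QR part
  intro Uplus Rplus hQR hUp hRu
  have hdet : IsUnit Rplus.det := (Matrix.isUnit_iff_isUnit_det _).mp hRu
  have hinv1 : Rplus * Rplus⁻¹ = 1 := Matrix.mul_nonsing_inv _ hdet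
  have hUplus : Uplus = (U - η • grad) * Rplus⁻¹ := by
    rw [hQR, Matrix.mul_assoc, hinv1, Matrix.mul_one]
  -- lower bound for Rplus
  have hRlow : ∀ y : EuclideanSpace ℝ (Fin r),
      (1 - η * ‖grad‖) * ‖y‖ ≤ ‖Matrix.toEuclideanLin Rplus y‖ := by
    intro y
    have h1 : ‖Matrix.toEuclideanLin Rplus y‖
        = ‖Matrix.toEuclideanLin (U - η • grad) y‖ := by
      rw [hQR, TL_mul, TL_isometry Uplus hUp]
    have h2 : Matrix.toEuclideanLin (U - η • grad) y
        = Matrix.toEuclideanLin U y - η • Matrix.toEuclideanLin grad y := by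
      rw [map_sub, _root_.map_smul, LinearMap.sub_apply, LinearMap.smul_apply]
    have h3 : ‖η • Matrix.toEuclideanLin grad y‖ ≤ η * ‖grad‖ * ‖y‖ := by
      rw [norm_smul, Real.norm_of_nonneg hη0, mul_assoc]
      exact mul_le_mul_of_nonneg_left (TL_le _ _) hη0
    have h4 := norm_sub_norm_le (Matrix.toEuclideanLin U y) (η • Matrix.toEuclideanLin grad y)
    rw [← h2] at h4
    rw [h1]
    have h5 : ‖Matrix.toEuclideanLin U y‖ = ‖y‖ := TL_isometry U hU y
    nlinarith [norm_nonneg y]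
  have hRinv : ‖Rplus⁻¹‖ ≤ (1 - η * ‖grad‖)⁻¹ := by
    refine norm_le_of_bound _ _ (by positivity) fun x => ?_
    set y := Matrix.toEuclideanLin Rplus⁻¹ x with hy
    have h1 : Matrix.toEuclideanLin Rplus y = x := by
      rw [hy, ← TL_mul, hinv1, TL_one]
    have h2 := hRlow y
    rw [h1] at h2
    rw [inv_mul_eq_div, le_div_iff₀ part1]
    linarith
  -- conclude
  rw [← hP, hUplus, ← Matrix.mul_assoc]
  calc ‖P * (U - η • grad) * Rplus⁻¹‖ ≤ ‖P * (U - η • grad)‖ * ‖Rplus⁻¹‖ :=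
        Matrix.l2_opNorm_mul _ _
    _ ≤ ‖P * (U - η • grad)‖ * (1 - η * ‖grad‖)⁻¹ :=
        mul_le_mul_of_nonneg_left hRinv (norm_nonneg _)
    _ = ‖P * (U - η • grad)‖ / (1 - η * ‖grad‖) := (div_eq_mul_inv _ _).symm
    _ ≤ δ * (1 - η * (lam - 3 * ε / δ - 2 * e)) := part2
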